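/- For any density operator σ on ℂ²⊗ℂ² with second partial trace Tr_Y(σ) = (1/2)I, and v = cos(π/8)|00⟩ + sin(π/8)|11⟩, it holds that ⟨vv*, σ⟩ ≤ cos²(π/8). -/

import Mathlib

open Matrix
open scoped Kronecker ComplexOrder

noncomputable section

/-- `Φ ⊗ id` : apply a linear map `Φ` on `L(X)` to the first tensor factor of `L(X ⊗ Z)`. -/
def lmapTensorId {n m k : Type*} [Fintype n] [Fintype k]
    (Φ : Matrix n n ℂ →ₗ[ℂ] Matrix m m ℂ)
    (M : Matrix (n × k) (n × k) ℂ) : Matrix (m × k) (m × k) ℂ :=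
  fun p q => Φ (fun i j => M (i, p.2) (j, q.2)) p.1 q.1

/-- `id ⊗ Ψ` : apply a linear map `Ψ` on `L(Z)` to the second tensor factor of `L(Y ⊗ Z)`. -/
def idTensorLmap {n k l : Type*} [Fintype n] [Fintype k]
    (Ψ : Matrix k k ℂ →ₗ[ℂ] Matrix l l ℂ)
    (M : Matrix (n × k) (n × k) ℂ) : Matrix (n × l) (n × l) ℂ :=
  fun p q => Ψ (fun a b => M (p.1, a) (q.1, b)) p.2 q.2

/-- Complete positivity: `Φ ⊗ id_k` maps positive semidefinite operators to positive
semidefinite operators for every finite-dimensional ancilla `k`. -/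
def IsCompletelyPositive {n m : Type*} [Fintype n] [Fintype m]
    (Φ : Matrix n n ℂ →ₗ[ℂ] Matrix m m ℂ) : Prop :=
  ∀ (k : Type) [Fintype k] [DecidableEq k],
    ∀ M : Matrix (n × k) (n × k) ℂ, M.PosSemidef → (lmapTensorId Φ M).PosSemidef

def IsTracePreserving {n m : Type*} [Fintype n] [Fintype m]
    (Φ : Matrix n n ℂ →ₗ[ℂ] Matrix m m ℂ) : Prop :=
  ∀ M : Matrix n n ℂ, (Φ M).trace = M.trace

/-- Partial trace over the first tensor factor. -/
def trFst {n k : Type*} [Fintype n] (M : Matrix (n × k) (n × k) ℂ) : Matrix k k ℂ :=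
  fun a b => ∑ i : n, M (i, a) (i, b)

/-- Partial trace over the second tensor factor. -/
def trSnd {n k : Type*} [Fintype k] (M : Matrix (n × k) (n × k) ℂ) : Matrix n n ℂ :=
  fun i j => ∑ a : k, M (i, a) (j, a)

/-- Hilbert-Schmidt inner product `⟨A, B⟩ = Tr(A* B)`. -/
def minner {n : Type*} [Fintype n] (A B : Matrix n n ℂ) : ℂ := (Aᴴ * B).trace

/-- The square root of a positive semidefinite matrix, as defined in Mathlib (Dec 2024),
since removed from Mathlib. -/
def Matrix.PosSemidef.sqrt {𝕜 : Type*} [RCLike 𝕜] {n : Type*} [Fintype n] [DecidableEq n]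
    {A : Matrix n n 𝕜} (hA : A.PosSemidef) : Matrix n n 𝕜 :=
  (hA.1.eigenvectorUnitary : Matrix n n 𝕜) *
    diagonal ((RCLike.ofReal : ℝ → 𝕜) ∘ (√·) ∘ hA.1.eigenvalues) *
    (star hA.1.eigenvectorUnitary : Matrix n n 𝕜)

open Classical in
/-- Square root of a positive semidefinite matrix (junk value `0` otherwise). -/
def msqrt {n : Type*} [Fintype n] [DecidableEq n] (M : Matrix n n ℂ) : Matrix n n ℂ :=
  if h : M.PosSemidef then h.sqrt else 0

/-- Trace norm `‖M‖₁ = Tr √(M* M)`. -/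
def traceNorm {n : Type*} [Fintype n] [DecidableEq n] (M : Matrix n n ℂ) : ℝ :=
  ((Matrix.posSemidef_conjTranspose_mul_self M).sqrt.trace).re

/-- Fidelity `F(Q, R) = ‖√Q √R‖₁` of positive semidefinite matrices. -/
def fid {n : Type*} [Fintype n] [DecidableEq n] (Q R : Matrix n n ℂ) : ℝ :=
  traceNorm (msqrt Q * msqrt R)

/-- Choi-Jamiolkowski operator `J(Φ) = Σ_{i,j} Φ(|i⟩⟨j|) ⊗ |i⟩⟨j|`. -/
def choi {n m : Type*} [Fintype n] [DecidableEq n] [Fintype m]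
    (Φ : Matrix n n ℂ →ₗ[ℂ] Matrix m m ℂ) : Matrix (m × n) (m × n) ℂ :=
  fun p q => Φ (Matrix.single p.2 q.2 1) p.1 q.1

/-- Tensor product of vectors. -/
def tensorVec {α β : Type*} (v : α → ℂ) (w : β → ℂ) : α × β → ℂ := fun p => v p.1 * w p.2

/-- `u = (|00⟩ + |11⟩)/√2`. -/
def uVec : Fin 2 × Fin 2 → ℂ := fun p =>
  if p = (0, 0) then (Real.sqrt 2 : ℂ)⁻¹ else if p = (1, 1) then (Real.sqrt 2 : ℂ)⁻¹ else 0

/-- `v = cos(π/8)|00⟩ + sin(π/8)|11⟩`. -/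
def vVec : Fin 2 × Fin 2 → ℂ := fun p =>
  if p = (0, 0) then (Real.cos (Real.pi / 8) : ℂ)
  else if p = (1, 1) then (Real.sin (Real.pi / 8) : ℂ) else 0

/-- `w = -sin(π/8)|00⟩ + cos(π/8)|11⟩`. -/
def wVec : Fin 2 × Fin 2 → ℂ := fun p =>
  if p = (0, 0) then -(Real.sin (Real.pi / 8) : ℂ)
  else if p = (1, 1) then (Real.cos (Real.pi / 8) : ℂ) else 0


/-!
With `c = cos(π/8)` and `s = sin(π/8)`, `⟨vv*, σ⟩ = c² σ₀₀ + s² σ₁₁ + cs (σ₀₁ + σ₁₀)` in the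
basis `|00⟩, |11⟩`. Positivity of `σ` bounds the cross term by `σ₀₀ + σ₁₁`, and `Tr_Y σ = I/2`
bounds each diagonal entry by `1/2`, so `⟨vv*, σ⟩ ≤ (c + s)² / 2 = (1 + sin(π/4)) / 2 = c²`.
-/

theorem minner_vecMulVec_star_self {n : Type*} [Fintype n] (v : n → ℂ) (M : Matrix n n ℂ) :
    minner (vecMulVec v (star v)) M = star v ⬝ᵥ (M *ᵥ v) := by
  rw [minner, conjTranspose_vecMulVec, star_star, vecMulVec_mul, trace_vecMulVec,
    dotProduct_comm, dotProduct_mulVec]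

theorem Matrix.PosSemidef.re_add_re_le {𝕜 n : Type*} [RCLike 𝕜] [Fintype n] [DecidableEq n]
    {M : Matrix n n 𝕜} (hM : M.PosSemidef) (i j : n) :
    RCLike.re (M i j) + RCLike.re (M j i) ≤ RCLike.re (M i i) + RCLike.re (M j j) := by
  have := hM.re_dotProduct_nonneg (Pi.single i 1 - Pi.single j 1)
  simp only [star_sub, Pi.star_single, star_one, mulVec_sub, mulVec_single_one, sub_dotProduct,
    dotProduct_sub, single_dotProduct, col_apply, one_mul, map_sub] at this
  linarith

theorem Matrix.PosSemidef.apply_le_trFst {n k : Type*} [Fintype n]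
    {M : Matrix (n × k) (n × k) ℂ} (hM : M.PosSemidef) (i : n) (a : k) :
    M (i, a) (i, a) ≤ trFst M a a :=
  Finset.single_le_sum (f := fun j => M (j, a) (j, a)) (fun _ _ => hM.diag_nonneg)
    (Finset.mem_univ i)

theorem re_minner_vVec (M : Matrix (Fin 2 × Fin 2) (Fin 2 × Fin 2) ℂ) :
    (minner (vecMulVec vVec (star vVec)) M).re =
      Real.cos (Real.pi / 8) ^ 2 * (M (0, 0) (0, 0)).re
        + Real.sin (Real.pi / 8) ^ 2 * (M (1, 1) (1, 1)).re
        + Real.cos (Real.pi / 8) * Real.sin (Real.pi / 8)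
          * ((M (0, 0) (1, 1)).re + (M (1, 1) (0, 0)).re) := by
  rw [minner_vecMulVec_star_self]
  simp only [dotProduct, mulVec, Fintype.sum_prod_type, Fin.sum_univ_two, vVec, Pi.star_apply,
    RCLike.star_def, Complex.conj_ofReal, Prod.mk.injEq, Fin.isValue, zero_ne_one, one_ne_zero,
    and_true, and_false, ↓reduceIte, map_zero, mul_zero, zero_mul, add_zero, zero_add,
    Complex.add_re, Complex.mul_re, Complex.ofReal_re, Complex.ofReal_im, sub_zero]
  ring

theorem two_mul_cos_mul_sin_pi_div_eight :
    2 * Real.cos (Real.pi / 8) * Real.sin (Real.pi / 8) = 2 * Real.cos (Real.pi / 8) ^ 2 - 1 := by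
  have h := Real.sin_pi_div_four
  rw [← Real.cos_pi_div_four, show Real.pi / 4 = 2 * (Real.pi / 8) by ring, Real.sin_two_mul,
    Real.cos_two_mul] at h
  linarith

theorem stmt6_general (σ : Matrix (Fin 2 × Fin 2) (Fin 2 × Fin 2) ℂ)
    (hσ : σ.PosSemidef)
    (hpt : trFst σ = ((1 / 2 : ℝ) : ℂ) • (1 : Matrix (Fin 2) (Fin 2) ℂ)) :
    (minner (vecMulVec vVec (star vVec)) σ).re ≤ Real.cos (Real.pi / 8) ^ 2 := by
  set c := Real.cos (Real.pi / 8)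
  set s := Real.sin (Real.pi / 8)
  have hc : 0 ≤ c := Real.cos_nonneg_of_neg_pi_div_two_le_of_le (by linarith [Real.pi_pos])
    (by linarith [Real.pi_pos])
  have hs : 0 ≤ s := Real.sin_nonneg_of_nonneg_of_le_pi (by positivity) (by linarith [Real.pi_pos])
  have hdiag (i : Fin 2) : (σ (i, i) (i, i)).re ≤ 1 / 2 := by
    simpa [hpt] using Complex.re_le_re (hσ.apply_le_trFst i i)
  rw [re_minner_vVec]
  calc c ^ 2 * (σ (0, 0) (0, 0)).re + s ^ 2 * (σ (1, 1) (1, 1)).re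
        + c * s * ((σ (0, 0) (1, 1)).re + (σ (1, 1) (0, 0)).re)
      ≤ c ^ 2 * (σ (0, 0) (0, 0)).re + s ^ 2 * (σ (1, 1) (1, 1)).re
        + c * s * ((σ (0, 0) (0, 0)).re + (σ (1, 1) (1, 1)).re) := by
        gcongr c ^ 2 * _ + s ^ 2 * _ + c * s * ?_
        exact hσ.re_add_re_le (0, 0) (1, 1)
    _ = c * (c + s) * (σ (0, 0) (0, 0)).re + s * (c + s) * (σ (1, 1) (1, 1)).re := by ring
    _ ≤ c * (c + s) * (1 / 2) + s * (c + s) * (1 / 2) := by gcongr <;> apply hdiag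
    _ = c ^ 2 := by
      linear_combination (Real.cos_sq_add_sin_sq (Real.pi / 8) + two_mul_cos_mul_sin_pi_div_eight) / 2

/-- Any density operator `σ` on `ℂ² ⊗ ℂ²` with `Tr_Y(σ) = (1/2)·1` satisfies
`⟨vv*, σ⟩ ≤ cos²(π/8)` for `v = cos(π/8)|00⟩ + sin(π/8)|11⟩`. -/
theorem stmt6 (σ : Matrix (Fin 2 × Fin 2) (Fin 2 × Fin 2) ℂ)
    (hσ : σ.PosSemidef) (hσtr : σ.trace = 1)
    (hpt : trFst σ = ((1 / 2 : ℝ) : ℂ) • (1 : Matrix (Fin 2) (Fin 2) ℂ)) :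
    (minner (vecMulVec vVec (star vVec)) σ).re ≤ Real.cos (Real.pi / 8) ^ 2 :=
  stmt6_general σ hσ hpt

end
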